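/- Let Γ ≤ S_n be a permutation group and V, W two orthogonal invariant subspaces with R^n = fix(Γ) ⊕ V ⊕ W. Suppose z ∈ Z^n with Σ_i z_i = k is a core point for stab_Γ(π_V(z)) and has globally minimal projection onto V, i.e. ‖π_V(z)‖ ≤ ‖π_V(z')‖ for all z' ∈ Z^n with Σ_i z'_i = k. Let w ∈ W ∩ Z^n satisfy stab_Γ(π_V(z)) ≤ stab_Γ(w). Then for every m ∈ Z, the point z + m·w is a core point for Γ, i.e. conv(Γ(z + m·w)) contains no integral points other than its vertices. -/

import Mathlib

noncomputable section

open scoped RealInnerProductSpace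

def permAct {n : ℕ} (γ : Equiv.Perm (Fin n)) (x : EuclideanSpace ℝ (Fin n)) :
    EuclideanSpace ℝ (Fin n) := WithLp.toLp 2 (fun i => x (γ⁻¹ i))

def allOnes (n : ℕ) : EuclideanSpace ℝ (Fin n) := WithLp.toLp 2 (fun _ => 1)

def intVec {n : ℕ} (z : Fin n → ℤ) : EuclideanSpace ℝ (Fin n) := WithLp.toLp 2 (fun i => (z i : ℝ))

def orbitSet {n : ℕ} (Γ : Subgroup (Equiv.Perm (Fin n))) (x : EuclideanSpace ℝ (Fin n)) :
    Set (EuclideanSpace ℝ (Fin n)) := {y | ∃ γ ∈ Γ, y = permAct γ x}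

def IsCorePoint {n : ℕ} (Γ : Subgroup (Equiv.Perm (Fin n))) (z : Fin n → ℤ) : Prop :=
  ∀ y : Fin n → ℤ, intVec y ∈ convexHull ℝ (orbitSet Γ (intVec z)) →
    intVec y ∈ orbitSet Γ (intVec z)

def stabSub {n : ℕ} (Γ : Subgroup (Equiv.Perm (Fin n))) (v : EuclideanSpace ℝ (Fin n)) :
    Subgroup (Equiv.Perm (Fin n)) where
  carrier := {γ | γ ∈ Γ ∧ permAct γ v = v}
  one_mem' := ⟨Γ.one_mem, rfl⟩
  mul_mem' := fun {a b} ha hb => ⟨Γ.mul_mem ha.1 hb.1, by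
    have h : permAct (a * b) v = permAct a (permAct b v) := rfl
    rw [h, hb.2, ha.2]⟩
  inv_mem' := fun {a} ha => ⟨Γ.inv_mem ha.1, by
    conv_lhs => rw [← ha.2]
    have h : permAct a⁻¹ (permAct a v) = permAct (a⁻¹ * a) v := rfl
    rw [h, inv_mul_cancel]; rfl⟩

/-! Let `y` be an integral point in the convex hull of `Γ (z + m w)`. Since `w` has coordinate
sum `0`, so has `y - z`, hence `‖π_V z‖ ≤ ‖π_V y‖` by minimality. On the other hand `π_V y` is a
convex combination of the vectors `γ π_V z`, which all have norm `‖π_V z‖`; by strict convexity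
of the Euclidean norm they coincide, so after applying some `γ₀⁻¹` the point `y` lies in the
convex hull of the orbit of `z + m w` under `H = stab_Γ(π_V z)`. As `H` fixes `w`, that orbit is
the `H`-orbit of `z` translated by `m w`, and the core property of `z` for `H` concludes. -/

open Submodule
open scoped Pointwise

section PermutationAction

variable {n : ℕ}

lemma permAct_mul (γ δ : Equiv.Perm (Fin n)) (x : EuclideanSpace ℝ (Fin n)) :
    permAct (γ * δ) x = permAct γ (permAct δ x) := rfl

lemma permAct_permAct_inv (γ : Equiv.Perm (Fin n)) (x : EuclideanSpace ℝ (Fin n)) :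
    permAct γ (permAct γ⁻¹ x) = x := by
  rw [← permAct_mul, mul_inv_cancel]
  rfl

lemma permAct_add (γ : Equiv.Perm (Fin n)) (x y : EuclideanSpace ℝ (Fin n)) :
    permAct γ (x + y) = permAct γ x + permAct γ y := rfl

lemma permAct_smul (γ : Equiv.Perm (Fin n)) (c : ℝ) (x : EuclideanSpace ℝ (Fin n)) :
    permAct γ (c • x) = c • permAct γ x := rfl

lemma permAct_sum {ι : Type*} (γ : Equiv.Perm (Fin n)) (s : Finset ι)
    (x : ι → EuclideanSpace ℝ (Fin n)) :
    permAct γ (∑ i ∈ s, x i) = ∑ i ∈ s, permAct γ (x i) :=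
  map_sum (LinearIsometryEquiv.piLpCongrLeft 2 ℝ ℝ γ) x s

lemma norm_permAct (γ : Equiv.Perm (Fin n)) (x : EuclideanSpace ℝ (Fin n)) :
    ‖permAct γ x‖ = ‖x‖ :=
  (LinearIsometryEquiv.piLpCongrLeft 2 ℝ ℝ γ).norm_map x

lemma inner_permAct_permAct (γ : Equiv.Perm (Fin n)) (x y : EuclideanSpace ℝ (Fin n)) :
    ⟪permAct γ x, permAct γ y⟫ = ⟪x, y⟫ :=
  (LinearIsometryEquiv.piLpCongrLeft 2 ℝ ℝ γ).inner_map_map x y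

lemma permAct_intVec (γ : Equiv.Perm (Fin n)) (y : Fin n → ℤ) :
    permAct γ (intVec y) = intVec (fun i => y (γ⁻¹ i)) := rfl

lemma intVec_add_mul (z w : Fin n → ℤ) (m : ℤ) :
    intVec (fun i => z i + m * w i) = intVec z + (m : ℝ) • intVec w := by
  ext i
  simp [intVec]

lemma permAct_allOnes (γ : Equiv.Perm (Fin n)) : permAct γ (allOnes n) = allOnes n := rfl

lemma inner_allOnes_intVec (z : Fin n → ℤ) : ⟪allOnes n, intVec z⟫ = ((∑ i, z i : ℤ) : ℝ) := by
  simp [allOnes, intVec, PiLp.inner_apply]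

lemma inner_allOnes_of_mem_convexHull_orbitSet {Γ : Subgroup (Equiv.Perm (Fin n))}
    {x y : EuclideanSpace ℝ (Fin n)} (hy : y ∈ convexHull ℝ (orbitSet Γ x)) :
    ⟪allOnes n, y⟫ = ⟪allOnes n, x⟫ := by
  refine convexHull_min ?_ (convex_hyperplane (innerₗ _ (allOnes n)).isLinear _) hy
  rintro _ ⟨γ, -, rfl⟩
  rw [Set.mem_ofPred_eq, innerₗ_apply_apply, ← inner_permAct_permAct γ (allOnes n) x,
    permAct_allOnes]

lemma starProjection_permAct {Γ : Subgroup (Equiv.Perm (Fin n))}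
    {V : Submodule ℝ (EuclideanSpace ℝ (Fin n))} (hV : ∀ γ ∈ Γ, ∀ v ∈ V, permAct γ v ∈ V)
    {γ : Equiv.Perm (Fin n)} (hγ : γ ∈ Γ) (x : EuclideanSpace ℝ (Fin n)) :
    V.starProjection (permAct γ x) = permAct γ (V.starProjection x) := by
  set e := LinearIsometryEquiv.piLpCongrLeft 2 ℝ ℝ γ
  have hmap : V.map (e : EuclideanSpace ℝ (Fin n) →ₗ[ℝ] EuclideanSpace ℝ (Fin n)) = V := by
    refine le_antisymm (map_le_iff_le_comap.2 fun v hv => hV γ hγ v hv) fun v hv => ?_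
    exact ⟨permAct γ⁻¹ v, hV _ (Γ.inv_mem hγ) v hv, permAct_permAct_inv γ v⟩
  convert (e.toLinearIsometry.map_starProjection V x).symm using 3
  exacts [hmap.symm, rfl, rfl]

lemma orbitSet_add_of_fixed {H : Subgroup (Equiv.Perm (Fin n))} {v : EuclideanSpace ℝ (Fin n)}
    (hv : ∀ σ ∈ H, permAct σ v = v) (x : EuclideanSpace ℝ (Fin n)) :
    orbitSet H (x + v) = v +ᵥ orbitSet H x := by
  ext y
  simp only [orbitSet, Set.mem_vadd_set, vadd_eq_add, Set.mem_ofPred_eq]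
  constructor
  · rintro ⟨γ, hγ, rfl⟩
    exact ⟨_, ⟨γ, hγ, rfl⟩, by rw [permAct_add, hv γ hγ, add_comm]⟩
  · rintro ⟨_, ⟨γ, hγ, rfl⟩, rfl⟩
    exact ⟨γ, hγ, by rw [permAct_add, hv γ hγ, add_comm]⟩

lemma IsCorePoint.add_mul_of_fixed {H : Subgroup (Equiv.Perm (Fin n))} {z w : Fin n → ℤ}
    (hz : IsCorePoint H z) (hw : ∀ σ ∈ H, permAct σ (intVec w) = intVec w) (m : ℤ) :
    IsCorePoint H (fun i => z i + m * w i) := by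
  have hmw : ∀ σ ∈ H, permAct σ ((m : ℝ) • intVec w) = (m : ℝ) • intVec w := fun σ hσ => by
    rw [permAct_smul, hw σ hσ]
  intro y hy
  rw [intVec_add_mul, orbitSet_add_of_fixed hmw, convexHull_vadd] at hy
  rw [intVec_add_mul, orbitSet_add_of_fixed hmw]
  obtain ⟨y', hy', hyy' : _ +ᵥ y' = intVec y⟩ := hy
  have hy'_int : y' = intVec (fun i => y i + -m * w i) := by
    rw [intVec_add_mul, ← hyy', Int.cast_neg, neg_smul, vadd_eq_add, add_neg_cancel_comm]
  exact ⟨y', hy'_int ▸ hz _ (hy'_int ▸ hy'), hyy'⟩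

lemma exists_permAct_inv_mem_convexHull_orbitSet_stabSub {Γ : Subgroup (Equiv.Perm (Fin n))}
    {V : Submodule ℝ (EuclideanSpace ℝ (Fin n))} (hV : ∀ γ ∈ Γ, ∀ v ∈ V, permAct γ v ∈ V)
    {x y : EuclideanSpace ℝ (Fin n)} (hy : y ∈ convexHull ℝ (orbitSet Γ x))
    (hnorm : ‖V.starProjection x‖ ≤ ‖V.starProjection y‖) :
    ∃ γ ∈ Γ, permAct γ⁻¹ y ∈ convexHull ℝ (orbitSet (stabSub Γ (V.starProjection x)) x) := by
  obtain ⟨ι, _, p, c, hp, -, hc0, hc1, rfl⟩ := eq_pos_convex_span_of_mem_convexHull hy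
  choose γ hγΓ hγ using fun i => hp ⟨i, rfl⟩
  obtain ⟨i₀, -⟩ := Finset.nonempty_of_sum_ne_zero (hc1.symm ▸ one_ne_zero)
  set P := V.starProjection x
  have hproj : V.starProjection (∑ i, c i • p i) = ∑ i, c i • permAct (γ i) P := by
    simp only [map_sum, map_smul, hγ, starProjection_permAct hV (hγΓ _), P]
  have hall : ∀ i, permAct (γ i) P = permAct (γ i₀) P := by
    by_contra! ⟨i, hi⟩
    refine (norm_sum_lt_of_strictConvexSpace (t := Finset.univ) (fun i _ => (hc0 i).le) hc1
      (Finset.mem_univ i) (Finset.mem_univ i₀) hi (hc0 i).ne' (hc0 i₀).ne'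
      (fun j _ => (norm_permAct (γ j) P).le)).not_ge ?_
    rwa [← hproj]
  refine ⟨γ i₀, hγΓ i₀, ?_⟩
  simp only [permAct_sum, permAct_smul]
  refine (convex_convexHull ℝ _).sum_mem (fun i _ => (hc0 i).le) hc1 fun i _ => ?_
  refine subset_convexHull ℝ _ ⟨(γ i₀)⁻¹ * γ i, ⟨Γ.mul_mem (Γ.inv_mem (hγΓ i₀)) (hγΓ i), ?_⟩, ?_⟩
  · rw [permAct_mul, hall i, ← permAct_mul, inv_mul_cancel]
    rfl
  · rw [hγ i, permAct_mul]

end PermutationAction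

theorem stmt15_general {n : ℕ} (Γ : Subgroup (Equiv.Perm (Fin n)))
    (F V W : Submodule ℝ (EuclideanSpace ℝ (Fin n)))
    (hF : ∀ x : EuclideanSpace ℝ (Fin n), x ∈ F ↔ ∀ γ ∈ Γ, permAct γ x = x)
    (hVinv : ∀ γ ∈ Γ, ∀ v ∈ V, permAct γ v ∈ V)
    (hVW : ∀ v ∈ V, ∀ w ∈ W, ⟪v, w⟫ = 0)
    (hFW : ∀ f ∈ F, ∀ w ∈ W, ⟪f, w⟫ = 0)
    (z : Fin n → ℤ) (k : ℤ) (hk : ∑ i, z i = k)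
    (hmin : ∀ z' : Fin n → ℤ, ∑ i, z' i = k →
      ‖(V.orthogonalProjectionOnto (intVec z) : EuclideanSpace ℝ (Fin n))‖ ≤
        ‖(V.orthogonalProjectionOnto (intVec z') : EuclideanSpace ℝ (Fin n))‖)
    (hcore : IsCorePoint
      (stabSub Γ (V.orthogonalProjectionOnto (intVec z) : EuclideanSpace ℝ (Fin n))) z)
    (w : Fin n → ℤ) (hw : intVec w ∈ W)
    (hstab : stabSub Γ (V.orthogonalProjectionOnto (intVec z) : EuclideanSpace ℝ (Fin n)) ≤
      stabSub Γ (intVec w))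
    (m : ℤ) :
    IsCorePoint Γ (fun i => z i + m * w i) := by
  have hsum_w : ⟪allOnes n, intVec w⟫ = 0 := hFW _ ((hF _).2 fun γ _ => permAct_allOnes γ) _ hw
  have hproj : V.starProjection (intVec fun i => z i + m * w i) = V.starProjection (intVec z) := by
    have : V.starProjection (intVec w) = 0 :=
      (ker_starProjection V).ge ((mem_orthogonal V _).2 fun v hv => hVW v hv _ hw)
    rw [intVec_add_mul, map_add, map_smul, this, smul_zero, add_zero]
  intro y hy
  have hsum_y : ∑ i, y i = k := by
    have := inner_allOnes_of_mem_convexHull_orbitSet hy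
    rw [intVec_add_mul, inner_add_right, real_inner_smul_right, hsum_w, mul_zero, add_zero,
      inner_allOnes_intVec, inner_allOnes_intVec, hk] at this
    exact_mod_cast this
  obtain ⟨γ, hγ, hγy⟩ :=
    exists_permAct_inv_mem_convexHull_orbitSet_stabSub hVinv hy (hproj ▸ hmin y hsum_y)
  rw [hproj, permAct_intVec] at hγy
  obtain ⟨σ, hσ, hσy⟩ := hcore.add_mul_of_fixed (fun σ hσ => (hstab hσ).2) m _ hγy
  refine ⟨γ * σ, Γ.mul_mem hγ hσ.1, ?_⟩
  rw [permAct_mul, ← hσy, ← permAct_intVec, permAct_permAct_inv]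

theorem stmt15 {n : ℕ} (Γ : Subgroup (Equiv.Perm (Fin n)))
    (F V W : Submodule ℝ (EuclideanSpace ℝ (Fin n)))
    (hF : ∀ x : EuclideanSpace ℝ (Fin n), x ∈ F ↔ ∀ γ ∈ Γ, permAct γ x = x)
    (hVinv : ∀ γ ∈ Γ, ∀ v ∈ V, permAct γ v ∈ V)
    (hWinv : ∀ γ ∈ Γ, ∀ w ∈ W, permAct γ w ∈ W)
    (hVW : ∀ v ∈ V, ∀ w ∈ W, ⟪v, w⟫ = 0)
    (hFV : ∀ f ∈ F, ∀ v ∈ V, ⟪f, v⟫ = 0)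
    (hFW : ∀ f ∈ F, ∀ w ∈ W, ⟪f, w⟫ = 0)
    (hdecomp : ∀ x : EuclideanSpace ℝ (Fin n), ∃ f ∈ F, ∃ v ∈ V, ∃ w ∈ W, x = f + v + w)
    (z : Fin n → ℤ) (k : ℤ) (hk : ∑ i, z i = k)
    (hmin : ∀ z' : Fin n → ℤ, ∑ i, z' i = k →
      ‖(V.orthogonalProjectionOnto (intVec z) : EuclideanSpace ℝ (Fin n))‖ ≤
        ‖(V.orthogonalProjectionOnto (intVec z') : EuclideanSpace ℝ (Fin n))‖)
    (hcore : IsCorePoint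
      (stabSub Γ (V.orthogonalProjectionOnto (intVec z) : EuclideanSpace ℝ (Fin n))) z)
    (w : Fin n → ℤ) (hw : intVec w ∈ W)
    (hstab : stabSub Γ (V.orthogonalProjectionOnto (intVec z) : EuclideanSpace ℝ (Fin n)) ≤
      stabSub Γ (intVec w))
    (m : ℤ) :
    IsCorePoint Γ (fun i => z i + m * w i) :=
  stmt15_general Γ F V W hF hVinv hVW hFW z k hk hmin hcore w hw hstab m
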